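/- arXiv:1006.4378 — 4 statements merged into one kernel-verified Lean document; each statement's English description precedes it below -/
import Mathlib

section
/- Let (Q,σ) be a symmetric quiver whose underlying quiver is connected and has no oriented cycles. If there are two distinct arrows of the form x → σ(x) and y → σ(y) with x ≠ y, then Q contains a cycle (in the underlying graph); hence a connected symmetric quiver without cycles has at most one arrow of the form x → σ(x). -/
/-!
The involution σ turns arrows around, so it is a graph automorphism of the underlying graph
swapping the endpoints of the edge `x — σ x`. If the graph were a tree, this edge would be a
bridge, and σ would preserve the forest obtained by deleting it. The edge `y — σ y` survives the
deletion (no oriented cycles of length one or two), and `y` lies on the side of `x` or of `σ x`;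
applying σ puts `σ y` on the other side, so `y — σ y` reconnects `x` with `σ x`.
-/

open SimpleGraph

namespace SimpleGraph

variable {V : Type*} {G : SimpleGraph V}

lemma Reachable.deleteEdges_reachable_or {v x x' : V} (hv : G.Reachable v x) :
    (G.deleteEdges {s(x, x')}).Reachable v x ∨ (G.deleteEdges {s(x, x')}).Reachable v x' := by
  obtain ⟨w⟩ := hv
  induction w with
  | nil => exact .inl .rfl
  | @cons u w z huw _ ih =>
    by_cases he : s(u, w) = s(z, x')
    · rcases Sym2.eq_iff.mp he with ⟨hu, -⟩ | ⟨hu, -⟩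
      · exact .inl (hu ▸ .rfl)
      · exact .inr (hu ▸ .rfl)
    · have huw' : (G.deleteEdges {s(z, x')}).Adj u w := deleteEdges_adj.mpr ⟨huw, he⟩
      exact ih.imp huw'.reachable.trans huw'.reachable.trans

lemma Reachable.deleteEdges_map_of_involutive {φ : G →g G} (hφ : Function.Involutive φ)
    {x u v : V} (huv : (G.deleteEdges {s(x, φ x)}).Reachable u v) :
    (G.deleteEdges {s(x, φ x)}).Reachable (φ u) (φ v) := by
  have hadj : ∀ {u v}, (G.deleteEdges {s(x, φ x)}).Adj u v →
      (G.deleteEdges {s(x, φ x)}).Adj (φ u) (φ v) := by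
    intro u v h
    rw [deleteEdges_adj, Set.mem_singleton_iff] at h ⊢
    refine ⟨φ.map_adj h.1, fun he => h.2 ?_⟩
    have := congrArg (Sym2.map φ) he
    simp only [Sym2.map_mk, hφ _] at this
    rw [this, Sym2.eq_swap]
  exact huv.map ⟨φ, hadj⟩

theorem not_isBridge_of_involutive_hom {φ : G →g G} (hφ : Function.Involutive φ) {x y : V}
    (hyx : G.Reachable y x) (hy : G.Adj y (φ y)) (hne : s(y, φ y) ≠ s(x, φ x)) :
    ¬ G.IsBridge s(x, φ x) := by
  have hy' : (G.deleteEdges {s(x, φ x)}).Reachable y (φ y) :=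
    (deleteEdges_adj.mpr ⟨hy, hne⟩).reachable
  rw [isBridge_iff, not_not]
  rcases hyx.deleteEdges_reachable_or with hx | hφx
  · exact hx.symm.trans (hy'.trans (hx.deleteEdges_map_of_involutive hφ))
  · have hφy := hφx.deleteEdges_map_of_involutive hφ
    rw [hφ x] at hφy
    exact hφy.symm.trans (hy'.symm.trans hφx)

def fromRelHomOfReverse {r : V → V → Prop} {σ : V → V} (hσ : σ.Injective)
    (hr : ∀ u v, r u v → r (σ v) (σ u)) : fromRel r →g fromRel r where
  toFun := σ
  map_rel' := fun ⟨hne, huv⟩ => ⟨hσ.ne hne, huv.symm.imp (hr _ _) (hr _ _)⟩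

end SimpleGraph

theorem stmt5_general {Q0 Q1 : Type*}
    (t h : Q1 → Q0) (σ0 : Q0 → Q0) (σ1 : Q1 → Q1)
    (hσ0 : Function.Involutive σ0)
    (hta : ∀ a, t (σ1 a) = σ0 (h a)) (hha : ∀ a, h (σ1 a) = σ0 (t a))
    (hnoc : ∀ x : Q0, ¬ Relation.TransGen (fun u v => ∃ c : Q1, t c = u ∧ h c = v) x x)
    (hconn : (SimpleGraph.fromRel (fun u v : Q0 => ∃ c : Q1, t c = u ∧ h c = v)).Connected)
    (a b : Q1) (ha : h a = σ0 (t a)) (hb : h b = σ0 (t b)) (hab : t a ≠ t b) :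
    ¬ (SimpleGraph.fromRel (fun u v : Q0 => ∃ c : Q1, t c = u ∧ h c = v)).IsAcyclic := by
  intro hacyc
  let φ := fromRelHomOfReverse hσ0.injective
    (r := fun u v => ∃ c : Q1, t c = u ∧ h c = v)
    (fun _ _ ⟨c, htc, hhc⟩ => ⟨σ1 c, by rw [hta, hhc], by rw [hha, htc]⟩)
  have hloop : ∀ c, h c = σ0 (t c) → t c ≠ σ0 (t c) := fun c hc hfix =>
    hnoc _ (.single ⟨c, rfl, hc.trans hfix.symm⟩)
  have hne : s(t b, σ0 (t b)) ≠ s(t a, σ0 (t a)) := by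
    intro he
    rcases Sym2.eq_iff.mp he with ⟨hba, -⟩ | ⟨hba, -⟩
    · exact hab hba.symm
    · exact hnoc _ (.head ⟨a, rfl, ha⟩ (.single ⟨b, hba, by rw [hb, hba, hσ0]⟩))
  exact not_isBridge_of_involutive_hom (φ := φ) hσ0 (hconn.preconnected _ _)
    ⟨hloop b hb, .inl ⟨b, rfl, hb⟩⟩ hne
    (isAcyclic_iff_forall_adj_isBridge.mp hacyc ⟨hloop a ha, .inl ⟨a, rfl, ha⟩⟩)

/-- Let (Q,σ) be a symmetric quiver whose underlying quiver is connected and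
has no oriented cycles.  If there are two arrows of the form x → σ(x) and y → σ(y) with
x ≠ y, then the underlying graph of Q contains a cycle (is not acyclic). -/
theorem stmt5 {Q0 Q1 : Type*}
    (t h : Q1 → Q0) (σ0 : Q0 → Q0) (σ1 : Q1 → Q1)
    (hσ0 : Function.Involutive σ0) (hσ1 : Function.Involutive σ1)
    (hta : ∀ a, t (σ1 a) = σ0 (h a)) (hha : ∀ a, h (σ1 a) = σ0 (t a))
    (hnoc : ∀ x : Q0, ¬ Relation.TransGen (fun u v => ∃ c : Q1, t c = u ∧ h c = v) x x)
    (hconn : (SimpleGraph.fromRel (fun u v : Q0 => ∃ c : Q1, t c = u ∧ h c = v)).Connected)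
    (a b : Q1) (ha : h a = σ0 (t a)) (hb : h b = σ0 (t b)) (hab : t a ≠ t b) :
    ¬ (SimpleGraph.fromRel (fun u v : Q0 => ∃ c : Q1, t c = u ∧ h c = v)).IsAcyclic :=
  stmt5_general t h σ0 σ1 hσ0 hta hha hnoc hconn a b ha hb hab
end

section
/- Let Q be a quiver without oriented cycles and V a representation of Q. The sequence 0 → ⊕_{a∈Q₁} V(ta) ⊗ P_{ha} → ⊕_{x∈Q₀} V(x) ⊗ P_x → V → 0, where the first map sends v ⊗ e_{ha} to V(a)(v) ⊗ e_{ha} − v ⊗ a and the second sends v ⊗ e_x to v (via the identification Hom(P_x, V) ≅ V(x)), is an exact sequence of representations (the Ringel projective resolution). -/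
/-!
At each vertex `y` the sequence is split exact already as a sequence of `K`-modules: `v ↦ v ⊗ e_y`
is a section of `d2`, and a contracting homotopy sends `v ⊗ p`, for a path `p = a₁ ⋯ aₙ` ending
at `y`, to `-∑ₖ V(a₁ ⋯ aₖ₋₁) v ⊗ (aₖ, aₖ₊₁ ⋯ aₙ)`. Applying `d1` to this sum telescopes to
`v ⊗ p - V(p) v ⊗ e_y`, and stripping the first arrow off `p` shows that the homotopy is a left
inverse of `d1`.
-/

open Function Quiver

theorem LinearMap.injective_range_eq_ker_surjective_of_homotopy {R M N P : Type*} [Semiring R]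
    [AddCommMonoid M] [AddCommMonoid N] [AddCommGroup P] [Module R M] [Module R N] [Module R P]
    {f : M →ₗ[R] N} {g : N →ₗ[R] P} {h : N →ₗ[R] M} {s : P →ₗ[R] N}
    (hhf : h ∘ₗ f = LinearMap.id) (hfh : f ∘ₗ h + s ∘ₗ g = LinearMap.id)
    (hgs : g ∘ₗ s = LinearMap.id) :
    Injective f ∧ LinearMap.range f = LinearMap.ker g ∧ Surjective g := by
  have hhf' := LinearMap.congr_fun hhf
  have hfh' := LinearMap.congr_fun hfh
  have hgs' := LinearMap.congr_fun hgs
  simp only [LinearMap.comp_apply, LinearMap.add_apply, LinearMap.id_apply] at hhf' hfh' hgs'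
  have hgfh (n : N) : g (f (h n)) = 0 := by
    simpa [hgs'] using congrArg g (hfh' n)
  refine ⟨LeftInverse.injective hhf', le_antisymm ?_ fun n hn => ⟨h n, ?_⟩,
    RightInverse.surjective hgs'⟩
  · rintro _ ⟨m, rfl⟩
    rw [LinearMap.mem_ker, ← hhf' m, hgfh]
  · simpa [LinearMap.mem_ker.mp hn] using hfh' n

namespace Quiver.Path

variable {K : Type*} [Semiring K] {Q : Type*} [Quiver.{v + 1} Q]
  {V : Q → Type*} [∀ x, AddCommGroup (V x)] [∀ x, Module K (V x)]
  {Vmap : ∀ {x y : Q}, (x ⟶ y) → (V x →ₗ[K] V y)}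
  {Vpath : ∀ {x y : Q}, Path x y → (V x →ₗ[K] V y)}
  (hnil : ∀ x : Q, Vpath (Path.nil : Path x x) = LinearMap.id)
  (hcons : ∀ {x y z : Q} (p : Path x y) (a : y ⟶ z), Vpath (p.cons a) = Vmap a ∘ₗ Vpath p)

include hnil hcons in
theorem eval_toPath_comp {x z w : Q} (a : x ⟶ z) (p : Path z w) :
    Vpath (a.toPath.comp p) = Vpath p ∘ₗ Vmap a := by
  induction p with
  | nil => rw [comp_nil, Hom.toPath, hcons, hnil, hnil, LinearMap.comp_id, LinearMap.id_comp]
  | cons p f ih => rw [comp_cons, hcons, hcons, ih, LinearMap.comp_assoc]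

variable (Q) in
abbrev PathsTo (y : Q) := Σ x : Q, Path x y

variable (Q) in
abbrev ArrowPathsTo (y : Q) := Σ x z : Q, (x ⟶ z) × Path z y

include hnil in
theorem comp_lsingle_nil {y : Q} [DecidableEq (PathsTo Q y)]
    (d2 : (Π₀ j : PathsTo Q y, V j.1) →ₗ[K] V y)
    (hd2 : ∀ (x : Q) (p : Path x y) (v : V x), d2 (DFinsupp.single ⟨x, p⟩ v) = Vpath p v) :
    d2 ∘ₗ DFinsupp.lsingle ⟨y, nil⟩ = LinearMap.id := by
  ext v
  simp [hd2, hnil]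

section ArrowExpansion

variable {y : Q} [DecidableEq (ArrowPathsTo Q y)]

variable (Vpath) in
/-- For `p = a₁ ⋯ aₙ` this is `v ↦ ∑ₖ V(a₁ ⋯ aₖ₋₁) v ⊗ (aₖ, aₖ₊₁ ⋯ aₙ q)`. -/
def arrowExpansion : {x w : Q} → Path x w → Path w y → (V x →ₗ[K] Π₀ i : ArrowPathsTo Q y, V i.1)
  | _, _, .nil, _ => 0
  | _, _, .cons (b := u) p f, q =>
      arrowExpansion p (f.toPath.comp q)
        + DFinsupp.lsingle (M := fun i : ArrowPathsTo Q y => V i.1) ⟨u, _, f, q⟩ ∘ₗ Vpath p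

include hnil hcons in
theorem arrowExpansion_toPath_comp {x z w : Q} (a : x ⟶ z) (p : Path z w) (q : Path w y)
    (v : V x) :
    arrowExpansion Vpath (a.toPath.comp p) q v
      = DFinsupp.single (⟨x, z, a, p.comp q⟩ : ArrowPathsTo Q y) v
        + arrowExpansion Vpath p q (Vmap a v) := by
  induction p with
  | nil =>
    rw [nil_comp]
    simp [Hom.toPath, arrowExpansion, hnil]
  | cons p f ih =>
    simp only [comp_cons, arrowExpansion, LinearMap.add_apply, LinearMap.comp_apply,
      DFinsupp.lsingle_apply, ih, eval_toPath_comp hnil hcons, add_assoc]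
    rw [← comp_assoc, comp_toPath_eq_cons]

variable [DecidableEq (PathsTo Q y)]
  (d1 : (Π₀ i : ArrowPathsTo Q y, V i.1) →ₗ[K] Π₀ j : PathsTo Q y, V j.1)
  (hd1 : ∀ (x z : Q) (a : x ⟶ z) (p : Path z y) (v : V x),
    d1 (DFinsupp.single (⟨x, z, a, p⟩ : ArrowPathsTo Q y) v)
      = DFinsupp.single (⟨z, p⟩ : PathsTo Q y) (Vmap a v)
        - DFinsupp.single (⟨x, a.toPath.comp p⟩ : PathsTo Q y) v)

include hnil hcons hd1 in
theorem map_arrowExpansion {x w : Q} (p : Path x w) (q : Path w y) (v : V x) :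
    d1 (arrowExpansion Vpath p q v)
      = DFinsupp.single (⟨w, q⟩ : PathsTo Q y) (Vpath p v)
        - DFinsupp.single (⟨x, p.comp q⟩ : PathsTo Q y) v := by
  induction p with
  | nil =>
    rw [nil_comp]
    simp [arrowExpansion, hnil]
  | cons p f ih =>
    simp only [arrowExpansion, LinearMap.add_apply, LinearMap.comp_apply, DFinsupp.lsingle_apply,
      map_add, ih, hd1, sub_add_sub_cancel', hcons, sub_right_inj]
    rw [← comp_assoc, comp_toPath_eq_cons]

variable (Vpath y) in
def ringelHomotopy : (Π₀ j : PathsTo Q y, V j.1) →ₗ[K] Π₀ i : ArrowPathsTo Q y, V i.1 :=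
  -DFinsupp.lsum ℕ fun j => arrowExpansion Vpath j.2 nil

@[simp]
theorem ringelHomotopy_single {x : Q} (p : Path x y) (v : V x) :
    ringelHomotopy Vpath y (DFinsupp.single ⟨x, p⟩ v) = -arrowExpansion Vpath p nil v := by
  simp [ringelHomotopy]

include hnil hcons hd1 in
theorem ringelHomotopy_comp : ringelHomotopy Vpath y ∘ₗ d1 = LinearMap.id := by
  refine DFinsupp.lhom_ext fun ⟨x, z, a, p⟩ v => ?_
  simp [hd1, arrowExpansion_toPath_comp hnil hcons]

variable (d2 : (Π₀ j : PathsTo Q y, V j.1) →ₗ[K] V y)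
  (hd2 : ∀ (x : Q) (p : Path x y) (v : V x), d2 (DFinsupp.single ⟨x, p⟩ v) = Vpath p v)

include hnil hcons hd1 hd2 in
theorem comp_ringelHomotopy_add_lsingle_nil_comp :
    d1 ∘ₗ ringelHomotopy Vpath y + DFinsupp.lsingle ⟨y, nil⟩ ∘ₗ d2 = LinearMap.id := by
  refine DFinsupp.lhom_ext fun ⟨x, p⟩ v => ?_
  simp [hd2, map_arrowExpansion hnil hcons d1 hd1]

end ArrowExpansion

end Quiver.Path

open Quiver.Path in
theorem stmt12_general {K : Type*} [Field K] {Q0 : Type} [Quiver.{1} Q0]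
    (Vobj : Q0 → Type) [∀ x, AddCommGroup (Vobj x)] [∀ x, Module K (Vobj x)]
    (Vmap : ∀ {x y : Q0}, (x ⟶ y) → (Vobj x →ₗ[K] Vobj y))
    (Vpath : ∀ {x y : Q0}, Quiver.Path x y → (Vobj x →ₗ[K] Vobj y))
    (hnil : ∀ x : Q0, Vpath (Quiver.Path.nil : Quiver.Path x x) = LinearMap.id)
    (hcons : ∀ {x y z : Q0} (p : Quiver.Path x y) (a : y ⟶ z),
      Vpath (p.cons a) = (Vmap a).comp (Vpath p))
    (y : Q0)
    [DecidableEq (Σ x : Q0, Quiver.Path x y)]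
    [DecidableEq (Σ x z : Q0, (x ⟶ z) × Quiver.Path z y)]
    (d1 : DFinsupp (fun i : Σ x z : Q0, (x ⟶ z) × Quiver.Path z y => Vobj i.1) →ₗ[K]
      DFinsupp (fun j : Σ x : Q0, Quiver.Path x y => Vobj j.1))
    (d2 : DFinsupp (fun j : Σ x : Q0, Quiver.Path x y => Vobj j.1) →ₗ[K] Vobj y)
    (hd2 : ∀ (x : Q0) (p : Quiver.Path x y) (v : Vobj x),
      d2 (DFinsupp.single (⟨x, p⟩ : Σ x : Q0, Quiver.Path x y) v) = Vpath p v)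
    (hd1 : ∀ (x z : Q0) (a : x ⟶ z) (p : Quiver.Path z y) (v : Vobj x),
      d1 (DFinsupp.single (⟨x, z, a, p⟩ : Σ x z : Q0, (x ⟶ z) × Quiver.Path z y) v)
        = DFinsupp.single (⟨z, p⟩ : Σ x : Q0, Quiver.Path x y) (Vmap a v)
          - DFinsupp.single
              (⟨x, (Quiver.Hom.toPath a).comp p⟩ : Σ x : Q0, Quiver.Path x y) v) :
    Function.Injective d1 ∧ LinearMap.range d1 = LinearMap.ker d2 ∧
      Function.Surjective d2 :=
  LinearMap.injective_range_eq_ker_surjective_of_homotopy (ringelHomotopy_comp hnil hcons d1 hd1)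
    (comp_ringelHomotopy_add_lsingle_nil_comp hnil hcons d1 hd1 d2 hd2)
    (comp_lsingle_nil hnil d2 hd2)

/-- Ringel's projective resolution.  Let Q be a quiver without oriented
cycles and V a representation (with Vpath the evaluation of V on paths).  For each vertex
y, the sequence
0 → ⊕_{a ∈ Q₁} V(ta) ⊗ P_{ha}(y) → ⊕_{x ∈ Q₀} V(x) ⊗ P_x(y) → V(y) → 0,
where P_x(y) is the free module on paths from x to y, the first map sends v ⊗ p (p a path
from ha to y) to V(a)(v) ⊗ p − v ⊗ (a·p), and the second sends v ⊗ p to V(p)(v), is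
exact. -/
theorem stmt12 {K : Type*} [Field K] {Q0 : Type} [Quiver.{1} Q0]
    (Vobj : Q0 → Type) [∀ x, AddCommGroup (Vobj x)] [∀ x, Module K (Vobj x)]
    (Vmap : ∀ {x y : Q0}, (x ⟶ y) → (Vobj x →ₗ[K] Vobj y))
    (Vpath : ∀ {x y : Q0}, Quiver.Path x y → (Vobj x →ₗ[K] Vobj y))
    (hnil : ∀ x : Q0, Vpath (Quiver.Path.nil : Quiver.Path x x) = LinearMap.id)
    (hcons : ∀ {x y z : Q0} (p : Quiver.Path x y) (a : y ⟶ z),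
      Vpath (p.cons a) = (Vmap a).comp (Vpath p))
    (hacyc : ∀ (x : Q0) (p : Quiver.Path x x), p = Quiver.Path.nil)
    (y : Q0)
    [DecidableEq (Σ x : Q0, Quiver.Path x y)]
    [DecidableEq (Σ x z : Q0, (x ⟶ z) × Quiver.Path z y)]
    (d1 : DFinsupp (fun i : Σ x z : Q0, (x ⟶ z) × Quiver.Path z y => Vobj i.1) →ₗ[K]
      DFinsupp (fun j : Σ x : Q0, Quiver.Path x y => Vobj j.1))
    (d2 : DFinsupp (fun j : Σ x : Q0, Quiver.Path x y => Vobj j.1) →ₗ[K] Vobj y)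
    (hd2 : ∀ (x : Q0) (p : Quiver.Path x y) (v : Vobj x),
      d2 (DFinsupp.single (⟨x, p⟩ : Σ x : Q0, Quiver.Path x y) v) = Vpath p v)
    (hd1 : ∀ (x z : Q0) (a : x ⟶ z) (p : Quiver.Path z y) (v : Vobj x),
      d1 (DFinsupp.single (⟨x, z, a, p⟩ : Σ x z : Q0, (x ⟶ z) × Quiver.Path z y) v)
        = DFinsupp.single (⟨z, p⟩ : Σ x : Q0, Quiver.Path x y) (Vmap a v)
          - DFinsupp.single
              (⟨x, (Quiver.Hom.toPath a).comp p⟩ : Σ x : Q0, Quiver.Path x y) v) :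
    Function.Injective d1 ∧ LinearMap.range d1 = LinearMap.ker d2 ∧
      Function.Surjective d2 :=
  stmt12_general Vobj Vmap Vpath hnil hcons y d1 d2 hd2 hd1
end

section
/- Let Q be a quiver and V, W finite-dimensional representations. Define d^V_W : ⊕_{x∈Q₀} Hom(V(x), W(x)) → ⊕_{a∈Q₁} Hom(V(ta), W(ha)) by (f(x))_{x} ↦ (f(ha)∘V(a) − W(a)∘f(ta))_{a}. Then Hom_Q(V,W) = Ker(d^V_W), and dim Ker(d^V_W) − dim Coker(d^V_W) = ⟨dim V, dim W⟩, the Euler form evaluated at the dimension vectors. -/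
open Module

/-- For representations V, W of a quiver Q, the map
d^V_W : ⊕_{x} Hom(V(x),W(x)) → ⊕_{a} Hom(V(ta),W(ha)),
(f(x))_x ↦ (f(ha)∘V(a) − W(a)∘f(ta))_a, has kernel Hom_Q(V,W) (the space of
representation morphisms), and dim Ker(d^V_W) − dim Coker(d^V_W) = ⟨dim V, dim W⟩, the
Euler form of the dimension vectors. -/
theorem stmt13 {K : Type*} [Field K] {Q0 Q1 : Type*} [Fintype Q0] [Fintype Q1]
    (t h : Q1 → Q0)
    (Vo Wo : Q0 → Type*)
    [∀ x, AddCommGroup (Vo x)] [∀ x, Module K (Vo x)] [∀ x, FiniteDimensional K (Vo x)]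
    [∀ x, AddCommGroup (Wo x)] [∀ x, Module K (Wo x)] [∀ x, FiniteDimensional K (Wo x)]
    (Vm : ∀ a, Vo (t a) →ₗ[K] Vo (h a)) (Wm : ∀ a, Wo (t a) →ₗ[K] Wo (h a))
    (d : (∀ x, Vo x →ₗ[K] Wo x) →ₗ[K] (∀ a, Vo (t a) →ₗ[K] Wo (h a)))
    (hd : ∀ f a, d f a = (f (h a)).comp (Vm a) - (Wm a).comp (f (t a))) :
    (∀ f, f ∈ LinearMap.ker d ↔ ∀ a, (f (h a)).comp (Vm a) = (Wm a).comp (f (t a))) ∧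
    ((finrank K (LinearMap.ker d) : ℤ)
        - (finrank K ((∀ a, Vo (t a) →ₗ[K] Wo (h a)) ⧸ LinearMap.range d) : ℤ)
      = (∑ x, (finrank K (Vo x) : ℤ) * (finrank K (Wo x) : ℤ))
        - ∑ a, (finrank K (Vo (t a)) : ℤ) * (finrank K (Wo (h a)) : ℤ)) := by
  have hker : ∀ f, f ∈ LinearMap.ker d ↔
      ∀ a, (f (h a)).comp (Vm a) = (Wm a).comp (f (t a)) := by
    intro f
    rw [LinearMap.mem_ker]
    constructor
    · intro hf a
      have := congrFun hf a
      rw [hd] at this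
      simpa [sub_eq_zero] using this
    · intro hf
      funext a
      rw [hd, hf a]
      simp
  refine ⟨hker, ?_⟩
  have hdom : finrank K (∀ x, Vo x →ₗ[K] Wo x)
      = ∑ x, finrank K (Vo x) * finrank K (Wo x) := by
    rw [finrank_pi_fintype]
    exact Finset.sum_congr rfl fun x _ => finrank_linearMap K K (Vo x) (Wo x)
  have hcod : finrank K (∀ a, Vo (t a) →ₗ[K] Wo (h a))
      = ∑ a, finrank K (Vo (t a)) * finrank K (Wo (h a)) := by
    rw [finrank_pi_fintype]
    exact Finset.sum_congr rfl fun a _ => finrank_linearMap K K (Vo (t a)) (Wo (h a))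
  have h1 := LinearMap.finrank_range_add_finrank_ker d
  have h2 := Submodule.finrank_quotient_add_finrank (LinearMap.range d)
  rw [hdom] at h1
  rw [hcod] at h2
  have h1' : ((finrank K (LinearMap.range d) : ℤ) + finrank K (LinearMap.ker d))
      = ∑ x, (finrank K (Vo x) : ℤ) * finrank K (Wo x) := by exact_mod_cast h1
  have h2' : ((finrank K ((∀ a, Vo (t a) →ₗ[K] Wo (h a)) ⧸ LinearMap.range d) : ℤ)
      + finrank K (LinearMap.range d))
      = ∑ a, (finrank K (Vo (t a)) : ℤ) * finrank K (Wo (h a)) := by exact_mod_cast h2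
  linarith
end

section
/- Let Q be a quiver of extended Dynkin (tame) type. The quadratic form q_Q(α) = Σ_{x∈Q₀} α(x)² − Σ_{a∈Q₁} α(ta)α(ha) is positive semidefinite on ℤ^{Q₀}. -/
/-- The underlying (multi)graph of a quiver matches the graph with vertices
{0,…,k−1} and edge list E. -/
def MatchesGraphN {Q0 Q1 : Type*} (t h : Q1 → Q0) (k : ℕ) (E : List (ℕ × ℕ)) : Prop :=
  ∃ e0 : Q0 → ℕ, Function.Injective e0 ∧ Set.range e0 = {m | m < k} ∧
    ∃ e1 : Q1 ≃ Fin E.length, ∀ a : Q1,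
      E.get (e1 a) = (e0 (t a), e0 (h a)) ∨ E.get (e1 a) = (e0 (h a), e0 (t a))

/-- Edge list of the extended Dynkin graph Ã_n (a cycle with n+1 vertices). -/
def edgesAtilde (n : ℕ) : List (ℕ × ℕ) :=
  ((List.range n).map (fun i => (i, i + 1))) ++ [(n, 0)]

/-- Edge list of the extended Dynkin graph D̃_n (n+1 vertices, n ≥ 4). -/
def edgesDtilde (n : ℕ) : List (ℕ × ℕ) :=
  [(0, 2), (1, 2)] ++ ((List.range (n - 4)).map (fun i => (i + 2, i + 3)))
    ++ [(n - 2, n - 1), (n - 2, n)]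

/-- Edge list of the extended Dynkin graph Ẽ₆ (7 vertices). -/
def edgesE6 : List (ℕ × ℕ) := [(0, 1), (1, 2), (0, 3), (3, 4), (0, 5), (5, 6)]

/-- Edge list of the extended Dynkin graph Ẽ₇ (8 vertices). -/
def edgesE7 : List (ℕ × ℕ) := [(0, 1), (1, 2), (2, 3), (3, 4), (4, 5), (5, 6), (3, 7)]

/-- Edge list of the extended Dynkin graph Ẽ₈ (9 vertices). -/
def edgesE8 : List (ℕ × ℕ) :=
  [(0, 1), (1, 2), (2, 3), (3, 4), (4, 5), (5, 6), (6, 7), (2, 8)]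

/-- A quiver is of extended Dynkin (tame) type if its underlying graph is of type
Ã_n (n ≥ 1), D̃_n (n ≥ 4), Ẽ₆, Ẽ₇ or Ẽ₈. -/
def IsExtendedDynkin {Q0 Q1 : Type*} (t h : Q1 → Q0) : Prop :=
  (∃ n, 1 ≤ n ∧ MatchesGraphN t h (n + 1) (edgesAtilde n)) ∨
  (∃ n, 4 ≤ n ∧ MatchesGraphN t h (n + 1) (edgesDtilde n)) ∨
  MatchesGraphN t h 7 edgesE6 ∨ MatchesGraphN t h 8 edgesE7 ∨ MatchesGraphN t h 9 edgesE8

/-!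
Vinberg's criterion. Suppose the graph carries weights `δ > 0` with
`∑_{y — x} δ y ≤ 2 δ x` at every vertex `x` (for an extended Dynkin diagram the null root
gives equality). For each edge `x — y`, AM-GM gives
`2 β x β y ≤ (δ y / δ x) β x² + (δ x / δ y) β y²`; summing over the edges and regrouping the
right-hand side by vertices yields `∑_x (β x² / δ x) ∑_{y — x} δ y ≤ 2 ∑_x β x²`.
-/

section SubadditiveCriterion

variable {K V ι : Type*} [Field K] [LinearOrder K] [IsStrictOrderedRing K]
  [Fintype V] [Fintype ι] [DecidableEq V]

theorem sum_mul_le_sum_sq_of_subadditive (s r : ι → V) (δ : V → K) (hδ : ∀ x, 0 < δ x)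
    (hsub : ∀ x, ∑ a, ((if s a = x then δ (r a) else 0) + (if r a = x then δ (s a) else 0))
      ≤ 2 * δ x)
    (β : V → K) :
    ∑ a, β (s a) * β (r a) ≤ ∑ x, β x ^ 2 := by
  set w : ι → K := fun a =>
    δ (r a) / δ (s a) * β (s a) ^ 2 + δ (s a) / δ (r a) * β (r a) ^ 2 with hw
  have amgm : ∀ a, 2 * (β (s a) * β (r a)) ≤ w a := by
    intro a
    have hs := hδ (s a)
    have hr := hδ (r a)
    rw [hw, ← sub_nonneg]
    have : δ (r a) / δ (s a) * β (s a) ^ 2 + δ (s a) / δ (r a) * β (r a) ^ 2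
        - 2 * (β (s a) * β (r a))
        = (δ (r a) * β (s a) - δ (s a) * β (r a)) ^ 2 / (δ (s a) * δ (r a)) := by
      field_simp
      ring
    rw [this]
    positivity
  have regroup : ∑ a, w a = ∑ x, β x ^ 2 / δ x *
      ∑ a, ((if s a = x then δ (r a) else 0) + (if r a = x then δ (s a) else 0)) := by
    simp only [Finset.mul_sum, mul_add, mul_ite, mul_zero]
    rw [Finset.sum_comm]
    refine Finset.sum_congr rfl fun a _ => ?_
    rw [Finset.sum_add_distrib, Finset.sum_ite_eq, Finset.sum_ite_eq]
    simp only [Finset.mem_univ, if_true, hw]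
    ring
  have bound : ∑ a, w a ≤ 2 * ∑ x, β x ^ 2 := by
    rw [regroup, Finset.mul_sum]
    refine Finset.sum_le_sum fun x _ => ?_
    calc β x ^ 2 / δ x * _ ≤ β x ^ 2 / δ x * (2 * δ x) := by
          have := hδ x
          gcongr
          exact hsub x
      _ = 2 * β x ^ 2 := by field_simp [(hδ x).ne']
  have hsum := Finset.sum_le_sum fun a (_ : a ∈ Finset.univ) => amgm a
  rw [← Finset.mul_sum] at hsum
  linarith

end SubadditiveCriterion

def weightedDegree (E : List (ℕ × ℕ)) (δ : ℕ → ℚ) (m : ℕ) : ℚ :=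
  (E.map fun e => (if e.1 = m then δ e.2 else 0) + (if e.2 = m then δ e.1 else 0)).sum

def IsSubadditive (k : ℕ) (E : List (ℕ × ℕ)) (δ : ℕ → ℚ) : Prop :=
  ∀ m < k, 0 < δ m ∧ weightedDegree E δ m ≤ 2 * δ m

theorem MatchesGraphN.tits_form_nonneg {Q0 Q1 : Type*} [Fintype Q0] [Fintype Q1]
    {t h : Q1 → Q0} {k : ℕ} {E : List (ℕ × ℕ)} {δ : ℕ → ℚ}
    (hQ : MatchesGraphN t h k E) (hδ : IsSubadditive k E δ) (α : Q0 → ℤ) :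
    0 ≤ (∑ x, α x ^ 2) - ∑ a, α (t a) * α (h a) := by
  classical
  obtain ⟨e0, hinj, hrange, e1, he⟩ := hQ
  have hlt : ∀ x, e0 x < k := fun x => (Set.ext_iff.mp hrange (e0 x)).mp ⟨x, rfl⟩
  have hdeg : ∀ x, ∑ a, ((if t a = x then δ (e0 (h a)) else 0)
      + (if h a = x then δ (e0 (t a)) else 0)) = weightedDegree E δ (e0 x) := by
    intro x
    rw [weightedDegree, ← Fin.sum_univ_fun_getElem, ← e1.sum_comp]
    refine Fintype.sum_congr _ _ fun a => ?_
    rw [← List.get_eq_getElem]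
    rcases he a with hE | hE <;> simp only [hE, hinj.eq_iff, add_comm]
  have key := sum_mul_le_sum_sq_of_subadditive t h (δ ∘ e0) (fun x => (hδ _ (hlt x)).1)
    (fun x => (hdeg x).trans_le (hδ _ (hlt x)).2) (fun x => (α x : ℚ))
  rw [sub_nonneg]
  exact_mod_cast key

theorem weightedDegree_nil (δ : ℕ → ℚ) (m : ℕ) : weightedDegree [] δ m = 0 := rfl

theorem weightedDegree_append (E F : List (ℕ × ℕ)) (δ : ℕ → ℚ) (m : ℕ) :
    weightedDegree (E ++ F) δ m = weightedDegree E δ m + weightedDegree F δ m := by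
  simp [weightedDegree]

theorem weightedDegree_cons (e : ℕ × ℕ) (E : List (ℕ × ℕ)) (δ : ℕ → ℚ) (m : ℕ) :
    weightedDegree (e :: E) δ m
      = (if e.1 = m then δ e.2 else 0) + (if e.2 = m then δ e.1 else 0) + weightedDegree E δ m := by
  simp [weightedDegree]

theorem weightedDegree_path (n a m : ℕ) (c : ℚ) (δ : ℕ → ℚ)
    (hδ : ∀ i, a ≤ i → i ≤ a + n → δ i = c) :
    weightedDegree ((List.range n).map fun i => (i + a, i + a + 1)) δ m
      = (if a ≤ m ∧ m < a + n then c else 0) + (if a < m ∧ m ≤ a + n then c else 0) := by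
  induction n with
  | zero =>
    simp only [List.range_zero, List.map_nil, weightedDegree_nil]
    split_ifs <;> first | omega | simp
  | succ n ih =>
    rw [List.range_succ, List.map_append, weightedDegree_append,
      ih fun i h₁ h₂ => hδ i h₁ (by omega), List.map_singleton, weightedDegree_cons,
      weightedDegree_nil, hδ (n + a) (by omega) (by omega), hδ (n + a + 1) (by omega) (by omega)]
    split_ifs <;> first | omega | ring

theorem isSubadditive_atilde (n : ℕ) : IsSubadditive (n + 1) (edgesAtilde n) fun _ => 1 := by
  intro m hm
  refine ⟨one_pos, ?_⟩
  have hpath := weightedDegree_path n 0 m 1 (fun _ => 1) fun _ _ _ => rfl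
  simp only [add_zero, zero_add] at hpath
  rw [edgesAtilde, weightedDegree_append, hpath, weightedDegree_cons, weightedDegree_nil]
  split_ifs <;> first | omega | norm_num

theorem isSubadditive_dtilde (n : ℕ) (hn : 4 ≤ n) :
    IsSubadditive (n + 1) (edgesDtilde n) fun m => if 2 ≤ m ∧ m ≤ n - 2 then 2 else 1 := by
  set δ : ℕ → ℚ := fun m => if 2 ≤ m ∧ m ≤ n - 2 then 2 else 1
  have hδ_end : ∀ i, i ≤ 1 ∨ n - 1 ≤ i → δ i = 1 := fun i hi => if_neg (by omega)
  have hδ_mid : ∀ i, 2 ≤ i → i ≤ n - 2 → δ i = 2 := fun i h₁ h₂ => if_pos ⟨h₁, h₂⟩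
  intro m hm
  refine ⟨by positivity, ?_⟩
  rw [edgesDtilde, weightedDegree_append, weightedDegree_append,
    weightedDegree_path (n - 4) 2 m 2 δ fun i h₁ h₂ => hδ_mid i h₁ (by omega)]
  simp only [weightedDegree_cons, weightedDegree_nil]
  rw [hδ_end 0 (by omega), hδ_end 1 (by omega), hδ_mid 2 le_rfl (by omega),
    hδ_mid (n - 2) (by omega) le_rfl, hδ_end (n - 1) (by omega), hδ_end n (by omega)]
  by_cases hmid : 2 ≤ m ∧ m ≤ n - 2
  · rw [hδ_mid m hmid.1 hmid.2]
    split_ifs <;> first | omega | norm_num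
  · rw [hδ_end m (by omega)]
    split_ifs <;> first | omega | norm_num

-- The weights on `Ẽ₆`, `Ẽ₇`, `Ẽ₈` are the coefficients of their null roots.
theorem isSubadditive_e6 :
    IsSubadditive 7 edgesE6 fun m => [3, 2, 1, 2, 1, 2, 1].getD m 0 := by
  intro m hm
  interval_cases m <;> norm_num [weightedDegree, edgesE6]

theorem isSubadditive_e7 :
    IsSubadditive 8 edgesE7 fun m => [1, 2, 3, 4, 3, 2, 1, 2].getD m 0 := by
  intro m hm
  interval_cases m <;> norm_num [weightedDegree, edgesE7]

theorem isSubadditive_e8 :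
    IsSubadditive 9 edgesE8 fun m => [2, 4, 6, 5, 4, 3, 2, 1, 3].getD m 0 := by
  intro m hm
  interval_cases m <;> norm_num [weightedDegree, edgesE8]

theorem IsExtendedDynkin.exists_isSubadditive {Q0 Q1 : Type*} {t h : Q1 → Q0}
    (hQ : IsExtendedDynkin t h) :
    ∃ k E δ, MatchesGraphN t h k E ∧ IsSubadditive k E δ := by
  rcases hQ with ⟨n, -, hQ⟩ | ⟨n, hn, hQ⟩ | hQ | hQ | hQ
  · exact ⟨_, _, _, hQ, isSubadditive_atilde n⟩
  · exact ⟨_, _, _, hQ, isSubadditive_dtilde n hn⟩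
  · exact ⟨_, _, _, hQ, isSubadditive_e6⟩
  · exact ⟨_, _, _, hQ, isSubadditive_e7⟩
  · exact ⟨_, _, _, hQ, isSubadditive_e8⟩

/-- For a quiver Q of extended Dynkin (tame) type, the Tits quadratic form
q_Q(α) = Σ_x α(x)² − Σ_a α(ta)α(ha) is positive semidefinite on ℤ^{Q₀}. -/
theorem stmt15 {Q0 Q1 : Type*} [Fintype Q0] [Fintype Q1] (t h : Q1 → Q0)
    (htame : IsExtendedDynkin t h) (α : Q0 → ℤ) :
    0 ≤ (∑ x, α x ^ 2) - ∑ a, α (t a) * α (h a) := by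
  obtain ⟨k, E, δ, hQ, hδ⟩ := htame.exists_isSubadditive
  exact hQ.tits_form_nonneg hδ α
end
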